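/- arXiv:1109.6749 — 3 statements merged into one kernel-verified Lean document; each statement's English description precedes it below -/
import Mathlib

section
/- Let P be a closed subset of Cantor space, let l be a natural number, and let τ be a finite binary string that is l-extendible in P (i.e., λ(P | τ) ≥ 2^{-l}, where P | τ = {X : τ⌢X ∈ P}). Then there are at least two strings σ extending τ of length |τ| + l + 1 that are (l+1)-extendible in P. -/
open MeasureTheory

/-- The basic clopen set `[σ]` of infinite binary sequences extending the string `σ`. -/
def cylinder (σ : List Bool) : Set (ℕ → Bool) :=
  {X | ∀ i : Fin σ.length, X i = σ.get i}

/-- The open set `⟦W⟧ = ⋃_{σ ∈ W} [σ]` determined by a set of strings. -/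
def stringsOpen (W : Set (List Bool)) : Set (ℕ → Bool) :=
  ⋃ σ ∈ W, cylinder σ

/-- `μ` is the fair-coin (uniform) product measure on Cantor space `2^ω`:
a probability measure giving each basic cylinder `[σ]` measure `2^{-|σ|}`. -/
def IsFairCoin (μ : Measure (ℕ → Bool)) : Prop :=
  IsProbabilityMeasure μ ∧ ∀ σ : List Bool, μ (cylinder σ) = (2 : ENNReal)⁻¹ ^ σ.length

/-- `τ⌢X`: the concatenation of a finite string with an infinite sequence. -/
def ocat (τ : List Bool) (X : ℕ → Bool) : ℕ → Bool :=
  fun i => if h : i < τ.length then τ.get ⟨i, h⟩ else X (i - τ.length)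

/-- `B ∣ τ = {X : τ⌢X ∈ B}`, the localization of a class to the string `τ`. -/
def localize (B : Set (ℕ → Bool)) (τ : List Bool) : Set (ℕ → Bool) :=
  {X | ocat τ X ∈ B}

/-- The first `k` bits of `A` as a finite string. -/
def initSeg (A : ℕ → Bool) (k : ℕ) : List Bool :=
  List.ofFn fun i : Fin k => A i

/-- `τ` is `l`-extendible in `P` if `λ(P ∣ τ) ≥ 2^{-l}`. -/
def Extendible (μ : Measure (ℕ → Bool)) (l : ℕ) (P : Set (ℕ → Bool)) (τ : List Bool) : Prop :=
  (2 : ENNReal)⁻¹ ^ l ≤ μ (localize P τ)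

/-!
The fair-coin measure restricted to a cylinder `[ρ]` is `2^{-|ρ|}` times the image of the
measure under `X ↦ ρ⌢X`: both measures agree on the π-system of cylinders. Hence
`λ(P ∣ τ) = 2^{-(l+1)} ∑_ρ λ(P ∣ τρ)`, the sum running over the `2^{l+1}` strings `ρ` of length
`l + 1`, so these values, each at most `1`, sum to at least `2`. If at most one of them reached
`2^{-(l+1)}`, the sum would be below `1 + 2^{l+1} · 2^{-(l+1)} = 2`.
-/

open scoped ENNReal

section Cylinders

variable {σ ρ τ : List Bool} {X Y : ℕ → Bool}

theorem mem_cylinder_iff_getElem : X ∈ cylinder σ ↔ ∀ i (h : i < σ.length), X i = σ[i] :=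
  ⟨fun hX i h => hX ⟨i, h⟩, fun hX i => hX i i.2⟩

theorem mem_cylinder_initSeg {n : ℕ} : Y ∈ cylinder (initSeg X n) ↔ ∀ i < n, Y i = X i := by
  simp [mem_cylinder_iff_getElem, initSeg]

theorem mem_cylinder_iff_of_mem (hX : X ∈ cylinder σ) :
    Y ∈ cylinder σ ↔ ∀ i < σ.length, Y i = X i := by
  rw [mem_cylinder_iff_getElem] at hX ⊢
  exact forall₂_congr fun i h => by rw [hX i h]

theorem cylinder_inter_cylinder_of_mem (hσ : X ∈ cylinder σ) (hρ : X ∈ cylinder ρ) :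
    cylinder σ ∩ cylinder ρ = cylinder (initSeg X (max σ.length ρ.length)) := by
  ext Y
  simp only [Set.mem_inter_iff, mem_cylinder_iff_of_mem hσ, mem_cylinder_iff_of_mem hρ,
    mem_cylinder_initSeg, lt_max_iff]
  grind

theorem ocat_apply_of_lt {i : ℕ} (h : i < τ.length) : ocat τ X i = τ[i] := by
  simp [ocat, h]

theorem ocat_apply_add (i : ℕ) : ocat τ X (τ.length + i) = X i := by
  simp [ocat]

theorem ocat_mem_cylinder : ocat τ X ∈ cylinder τ :=
  mem_cylinder_iff_getElem.2 fun _ h => ocat_apply_of_lt h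

theorem preimage_ocat_cylinder_of_mem (hσ : X ∈ cylinder σ) (hρ : X ∈ cylinder ρ) :
    ocat ρ ⁻¹' cylinder σ =
      cylinder (initSeg (fun j => X (ρ.length + j)) (σ.length - ρ.length)) := by
  ext Y
  rw [Set.mem_preimage, mem_cylinder_iff_of_mem hσ, mem_cylinder_initSeg]
  constructor
  · intro h j hj
    rw [← h _ (by omega), ocat_apply_add]
  · intro h i hi
    rcases lt_or_ge i ρ.length with hi' | hi'
    · rw [ocat_apply_of_lt hi', mem_cylinder_iff_getElem.1 hρ i hi']
    · obtain ⟨j, rfl⟩ := Nat.exists_eq_add_of_le hi'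
      rw [ocat_apply_add, h j (by omega)]

theorem ocat_append (τ ρ : List Bool) (X : ℕ → Bool) :
    ocat (τ ++ ρ) X = ocat τ (ocat ρ X) := by
  funext i
  simp only [ocat, List.length_append, List.get_eq_getElem]
  grind

theorem localize_localize (B : Set (ℕ → Bool)) (τ ρ : List Bool) :
    localize (localize B τ) ρ = localize B (τ ++ ρ) := by
  ext X
  simp [localize, ocat_append]

theorem preimage_restrict_singleton {k : ℕ} (v : Fin k → Bool) :
    (fun X (i : Fin k) => X i) ⁻¹' {v} = cylinder (List.ofFn v) := by
  ext X
  simp [mem_cylinder_iff_getElem, funext_iff, Fin.forall_iff]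

end Cylinders

section Measurability

theorem cylinder_nil : cylinder [] = Set.univ :=
  Set.eq_univ_of_forall fun _ i => i.elim0

theorem measurableSet_cylinder (σ : List Bool) : MeasurableSet (cylinder σ) := by
  have : cylinder σ = ⋂ i : Fin σ.length, (fun X => X i) ⁻¹' {σ[i]} := by
    ext X; simp [mem_cylinder_iff_getElem, Fin.forall_iff]
  rw [this]
  exact MeasurableSet.iInter fun i => measurable_pi_apply _ (measurableSet_singleton _)

theorem measurable_ocat (τ : List Bool) : Measurable (ocat τ) := by
  refine measurable_pi_lambda _ fun i => ?_
  by_cases h : i < τ.length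
  · simp only [ocat, h, dif_pos]; exact measurable_const
  · simp only [ocat, h, dif_neg, not_false_iff]; exact measurable_pi_apply _

theorem range_ocat (τ : List Bool) : Set.range (ocat τ) = cylinder τ := by
  refine Set.Subset.antisymm (Set.range_subset_iff.2 fun _ => ocat_mem_cylinder) fun X hX => ?_
  refine ⟨fun j => X (τ.length + j), funext fun i => ?_⟩
  rcases lt_or_ge i τ.length with hi | hi
  · rw [ocat_apply_of_lt hi, mem_cylinder_iff_getElem.1 hX i hi]
  · obtain ⟨j, rfl⟩ := Nat.exists_eq_add_of_le hi
    rw [ocat_apply_add]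

theorem measurableEmbedding_ocat (τ : List Bool) : MeasurableEmbedding (ocat τ) :=
  .of_measurable_inverse (measurable_ocat τ) (range_ocat τ ▸ measurableSet_cylinder τ)
    (measurable_pi_lambda _ fun j => measurable_pi_apply (τ.length + j))
    fun _ => funext fun j => ocat_apply_add j

theorem isPiSystem_cylinder : IsPiSystem (Set.range _root_.cylinder) := by
  rintro _ ⟨σ, rfl⟩ _ ⟨ρ, rfl⟩ ⟨X, hσ, hρ⟩
  exact ⟨_, (cylinder_inter_cylinder_of_mem hσ hρ).symm⟩

theorem generateFrom_cylinder :
    MeasurableSpace.generateFrom (Set.range _root_.cylinder) = MeasurableSpace.pi := by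
  refine le_antisymm (MeasurableSpace.generateFrom_le ?_) (iSup_le fun i => ?_)
  · rintro _ ⟨σ, rfl⟩
    exact measurableSet_cylinder σ
  let _ := MeasurableSpace.generateFrom (Set.range _root_.cylinder)
  have hrestrict : Measurable fun (X : ℕ → Bool) (j : Fin (i + 1)) => X j :=
    measurable_to_countable' fun v => by
      rw [preimage_restrict_singleton]
      exact MeasurableSpace.measurableSet_generateFrom ⟨_, rfl⟩
  exact measurable_iff_comap_le.1 ((measurable_pi_apply (Fin.last i)).comp hrestrict)

theorem ext_of_cylinder {ν₁ ν₂ : Measure (ℕ → Bool)} [IsFiniteMeasure ν₁]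
    (h : ∀ σ, ν₁ (cylinder σ) = ν₂ (cylinder σ)) : ν₁ = ν₂ :=
  ext_of_generate_finite _ generateFrom_cylinder.symm isPiSystem_cylinder
    (fun _ ⟨σ, hσ⟩ => hσ ▸ h σ) (cylinder_nil ▸ h [])

end Measurability

section FairCoin

variable {μ : Measure (ℕ → Bool)}

theorem measure_cylinder_initSeg (hμ : IsFairCoin μ) (X : ℕ → Bool) (n : ℕ) :
    μ (cylinder (initSeg X n)) = 2⁻¹ ^ n := by
  rw [hμ.2, initSeg, List.length_ofFn]

theorem restrict_cylinder_eq_smul_map (hμ : IsFairCoin μ) (ρ : List Bool) :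
    μ.restrict (cylinder ρ) = (2⁻¹ ^ ρ.length : ℝ≥0∞) • μ.map (ocat ρ) := by
  have _ := hμ.1
  refine ext_of_cylinder fun σ => ?_
  rw [Measure.restrict_apply (measurableSet_cylinder σ), Measure.smul_apply, smul_eq_mul,
    (measurableEmbedding_ocat ρ).map_apply]
  by_cases hσρ : (cylinder σ ∩ cylinder ρ).Nonempty
  · obtain ⟨X, hσ, hρ⟩ := hσρ
    rw [cylinder_inter_cylinder_of_mem hσ hρ, preimage_ocat_cylinder_of_mem hσ hρ,
      measure_cylinder_initSeg hμ, measure_cylinder_initSeg hμ, ← pow_add]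
    congr 1
    omega
  · have hpre : ocat ρ ⁻¹' cylinder σ = ∅ :=
      Set.eq_empty_of_forall_notMem fun Y hY => hσρ ⟨_, hY, ocat_mem_cylinder⟩
    rw [Set.not_nonempty_iff_eq_empty.1 hσρ, hpre, measure_empty, mul_zero]

theorem measure_inter_cylinder (hμ : IsFairCoin μ) (B : Set (ℕ → Bool)) (ρ : List Bool) :
    μ (B ∩ cylinder ρ) = 2⁻¹ ^ ρ.length * μ (localize B ρ) := by
  rw [← Measure.restrict_apply' (measurableSet_cylinder ρ), restrict_cylinder_eq_smul_map hμ,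
    Measure.smul_apply, smul_eq_mul, (measurableEmbedding_ocat ρ).map_apply]
  rfl

theorem measure_eq_sum_inter_cylinder (μ : Measure (ℕ → Bool)) (B : Set (ℕ → Bool)) (k : ℕ) :
    μ B = ∑ v : Fin k → Bool, μ (B ∩ cylinder (List.ofFn v)) := by
  have h := sum_measure_preimage_singleton (μ := μ.restrict B) Finset.univ
    (f := fun X (i : Fin k) => X i) fun v _ => by
      rw [preimage_restrict_singleton]; exact measurableSet_cylinder _
  simp only [preimage_restrict_singleton, Measure.restrict_apply (measurableSet_cylinder _),
    Finset.coe_univ, Set.preimage_univ, Measure.restrict_apply_univ] at h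
  simp_rw [Set.inter_comm B]
  exact h.symm

theorem measure_localize_eq_sum (hμ : IsFairCoin μ) (B : Set (ℕ → Bool)) (τ : List Bool)
    (k : ℕ) :
    μ (localize B τ) = ∑ v : Fin k → Bool, 2⁻¹ ^ k * μ (localize B (τ ++ List.ofFn v)) := by
  rw [measure_eq_sum_inter_cylinder μ _ k]
  refine Finset.sum_congr rfl fun v _ => ?_
  rw [measure_inter_cylinder hμ, localize_localize, List.length_ofFn]

end FairCoin

theorem one_lt_card_filter_le_of_two_le_sum {ι : Type*} [Fintype ι] [Nonempty ι]
    {f : ι → ℝ≥0∞} {c : ℝ≥0∞} (hf : ∀ i, f i ≤ 1) (hc₀ : c ≠ 0) (hc : Fintype.card ι * c ≤ 1)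
    (hsum : 2 ≤ ∑ i, f i) : 1 < (Finset.univ.filter fun i => c ≤ f i).card := by
  classical
  have hlt : ∀ i, f i < (if c ≤ f i then 1 else 0) + c := fun i => by
    split_ifs with h
    · exact (hf i).trans_lt (ENNReal.lt_add_right ENNReal.one_ne_top hc₀)
    · simpa using h
  have : (1 + 1 : ℝ≥0∞) < (Finset.univ.filter fun i => c ≤ f i).card + 1 :=
    calc (1 + 1 : ℝ≥0∞) = 2 := one_add_one_eq_two
      _ ≤ ∑ i, f i := hsum
      _ < ∑ i, ((if c ≤ f i then 1 else 0) + c) :=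
        ENNReal.sum_lt_sum_of_nonempty Finset.univ_nonempty fun i _ => hlt i
      _ = (Finset.univ.filter fun i => c ≤ f i).card + Fintype.card ι * c := by
        rw [Finset.sum_add_distrib, Finset.sum_boole, Finset.sum_const, nsmul_eq_mul,
          Finset.card_univ]
      _ ≤ _ := add_le_add_right hc _
  exact_mod_cast (ENNReal.add_lt_add_iff_right ENNReal.one_ne_top).1 this

theorem stmt1_general (μ : Measure (ℕ → Bool)) (hμ : IsFairCoin μ)
    (P : Set (ℕ → Bool)) (l : ℕ) (τ : List Bool)
    (hτ : Extendible μ l P τ) :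
    ∃ σ₁ σ₂ : List Bool, σ₁ ≠ σ₂ ∧
      (τ <+: σ₁ ∧ σ₁.length = τ.length + l + 1 ∧ Extendible μ (l + 1) P σ₁) ∧
      (τ <+: σ₂ ∧ σ₂.length = τ.length + l + 1 ∧ Extendible μ (l + 1) P σ₂) := by
  have _ := hμ.1
  set c : ℝ≥0∞ := 2⁻¹ ^ (l + 1)
  have hc₀ : c ≠ 0 := pow_ne_zero _ (ENNReal.inv_ne_zero.2 ENNReal.ofNat_ne_top)
  have hc_top : c ≠ ⊤ := ENNReal.pow_ne_top (ENNReal.inv_ne_top.2 two_ne_zero)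
  have hcard : Fintype.card (Fin (l + 1) → Bool) * c = 1 := by
    rw [Fintype.card_fun, Fintype.card_bool, Fintype.card_fin, Nat.cast_pow, ← mul_pow,
      Nat.cast_ofNat, ENNReal.mul_inv_cancel two_ne_zero ENNReal.ofNat_ne_top, one_pow]
  have hsum : 2 ≤ ∑ v : Fin (l + 1) → Bool, μ (localize P (τ ++ List.ofFn v)) := by
    have h2c : (2⁻¹ : ℝ≥0∞) ^ l = c * 2 := by
      rw [show c = 2⁻¹ ^ l * 2⁻¹ from pow_succ _ _, mul_assoc,
        ENNReal.inv_mul_cancel two_ne_zero ENNReal.ofNat_ne_top, mul_one]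
    rwa [Extendible, measure_localize_eq_sum hμ P τ (l + 1), ← Finset.mul_sum, h2c,
      ENNReal.mul_le_mul_iff_right hc₀ hc_top] at hτ
  obtain ⟨v, hv, w, hw, hvw⟩ := Finset.one_lt_card.1 <|
    one_lt_card_filter_le_of_two_le_sum (fun _ => prob_le_one) hc₀ hcard.le hsum
  rw [Finset.mem_filter] at hv hw
  have hlen (u : Fin (l + 1) → Bool) : (τ ++ List.ofFn u).length = τ.length + l + 1 := by
    rw [List.length_append, List.length_ofFn, add_assoc]
  exact ⟨_, _, fun h => hvw (List.ofFn_injective (List.append_cancel_left h)),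
    ⟨List.prefix_append _ _, hlen v, hv.2⟩, ⟨List.prefix_append _ _, hlen w, hw.2⟩⟩

/-- Kučera's extension lemma: if `τ` is `l`-extendible in the closed set `P`,
then at least two extensions of `τ` of length `|τ| + l + 1` are
`(l+1)`-extendible in `P`. -/
theorem stmt1 (μ : Measure (ℕ → Bool)) (hμ : IsFairCoin μ)
    (P : Set (ℕ → Bool)) (hP : IsClosed P) (l : ℕ) (τ : List Bool)
    (hτ : Extendible μ l P τ) :
    ∃ σ₁ σ₂ : List Bool, σ₁ ≠ σ₂ ∧
      (τ <+: σ₁ ∧ σ₁.length = τ.length + l + 1 ∧ Extendible μ (l + 1) P σ₁) ∧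
      (τ <+: σ₂ ∧ σ₂.length = τ.length + l + 1 ∧ Extendible μ (l + 1) P σ₂) :=
  stmt1_general μ hμ P l τ hτ
end

section
/- Let (G_n)_{n∈ℕ} be a sequence of open subsets of 2^ω with λ(G_n) ≤ 2^{-2n-1} for all n, and set L_n = ⋃_{m ≤ n} G_m. Then there exists Z ∈ 2^ω such that for all n, λ(L_n | Z↾n) ≤ 1 − 2^{-n-1}; moreover any such Z avoids every G_n (i.e., Z ∉ G_n for all n). -/
/-! Greedy choice of bits: since `λ(B ∣ σ)` is the average of `λ(B ∣ σ0)` and `λ(B ∣ σ1)`, some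
one-bit extension of `σ` does not increase it. Choosing `Z↾(n+1)` this way for `L_n`, the step from
`L_n` to `L_{n+1}` adds at most `λ(G_{n+1} ∣ Z↾(n+1)) ≤ 2^{n+1} λ(G_{n+1}) ≤ 2^{-n-2}`, which
preserves the bound `1 - 2^{-n-1}`. Conversely, if `Z ∈ G_n` then, `G_n` being open, some
`[Z↾k] ⊆ G_n ⊆ L_k` with `k ≥ n`, and then `λ(L_k ∣ Z↾k) = 1`. -/

open MeasureTheory

open Set
open scoped ENNReal

namespace ENNReal

lemma two_pow_mul_inv_two_pow_two_mul_add_one (n : ℕ) :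
    (2 : ℝ≥0∞) ^ n * 2⁻¹ ^ (2 * n + 1) = 2⁻¹ ^ (n + 1) := by
  rw [show 2 * n + 1 = n + (n + 1) by ring, pow_add, ← mul_assoc, ← mul_pow,
    ENNReal.mul_inv_cancel two_ne_zero ofNat_ne_top, one_pow, one_mul]

lemma one_sub_inv_two_pow_add_inv_two_pow_succ (n : ℕ) :
    1 - 2⁻¹ ^ n + 2⁻¹ ^ (n + 1) = (1 : ℝ≥0∞) - 2⁻¹ ^ (n + 1) := by
  have hdouble : (2⁻¹ : ℝ≥0∞) ^ n = 2⁻¹ ^ (n + 1) + 2⁻¹ ^ (n + 1) := by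
    rw [← two_mul, pow_succ, mul_comm _ 2⁻¹, ← mul_assoc,
      ENNReal.mul_inv_cancel two_ne_zero ofNat_ne_top, one_mul]
  have hle : (2⁻¹ : ℝ≥0∞) ^ (n + 1) ≤ 1 - 2⁻¹ ^ (n + 1) :=
    le_sub_of_add_le_left (pow_ne_top (inv_ne_top.2 two_ne_zero))
      (hdouble ▸ pow_le_one₀ zero_le (ENNReal.inv_le_one.2 one_le_two))
  rw [hdouble, tsub_add_eq_tsub_tsub, tsub_add_cancel_of_le hle]

end ENNReal

namespace CantorSpace

lemma ocat_nil (X : ℕ → Bool) : ocat [] X = X := by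
  funext i
  simp [ocat]

lemma ocat_cons (b : Bool) (σ : List Bool) (X : ℕ → Bool) :
    ocat (b :: σ) X = ocat [b] (ocat σ X) := by
  funext i
  cases i <;> simp [ocat]

lemma ocat_append (σ ρ : List Bool) (X : ℕ → Bool) :
    ocat (σ ++ ρ) X = ocat σ (ocat ρ X) := by
  induction σ with
  | nil => rw [List.nil_append, ocat_nil]
  | cons b σ ih => rw [List.cons_append, ocat_cons, ih, ← ocat_cons]

lemma localize_nil (B : Set (ℕ → Bool)) : localize B [] = B := by
  ext X
  simp [localize, ocat_nil]

lemma localize_append (B : Set (ℕ → Bool)) (σ ρ : List Bool) :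
    localize B (σ ++ ρ) = localize (localize B σ) ρ := by
  ext X
  simp only [localize, mem_ofPred_eq, ocat_append]

lemma measurable_ocat (σ : List Bool) : Measurable (ocat σ) := by
  refine measurable_pi_iff.mpr fun i => ?_
  by_cases h : i < σ.length
  · simp [ocat, h]
  · simpa [ocat, h] using measurable_pi_apply (i - σ.length)

lemma measurableSet_localize {B : Set (ℕ → Bool)} (hB : MeasurableSet B) (σ : List Bool) :
    MeasurableSet (localize B σ) :=
  measurable_ocat σ hB

lemma mem_cylinder {X : ℕ → Bool} {σ : List Bool} :
    X ∈ cylinder σ ↔ ∀ i : Fin σ.length, X i = σ[i] :=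
  Iff.rfl

lemma cylinder_nil : cylinder [] = univ := by
  ext X; simp [mem_cylinder]

lemma mem_cylinder_cons {X : ℕ → Bool} {b : Bool} {σ : List Bool} :
    X ∈ cylinder (b :: σ) ↔ X 0 = b ∧ (fun i => X (i + 1)) ∈ cylinder σ := by
  simp [mem_cylinder, Fin.forall_fin_succ]

lemma ocat_mem_cylinder (σ : List Bool) (X : ℕ → Bool) : ocat σ X ∈ cylinder σ :=
  fun i => dif_pos i.2

lemma localize_eq_univ {B : Set (ℕ → Bool)} {σ : List Bool} (h : cylinder σ ⊆ B) :
    localize B σ = univ :=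
  eq_univ_of_forall fun X => h (ocat_mem_cylinder σ X)

lemma cylinder_initSeg (Z : ℕ → Bool) (k : ℕ) : cylinder (initSeg Z k) = PiNat.cylinder Z k := by
  ext X
  simp [mem_cylinder, initSeg, Fin.forall_iff]

lemma mem_cylinder_initSeg (X : ℕ → Bool) (k : ℕ) : X ∈ cylinder (initSeg X k) := by
  simp [cylinder_initSeg]

lemma initSeg_succ (Z : ℕ → Bool) (n : ℕ) : initSeg Z (n + 1) = initSeg Z n ++ [Z n] := by
  rw [initSeg, List.ofFn_succ', List.concat_eq_append]
  rfl

lemma eventually_cylinder_initSeg_subset {U : Set (ℕ → Bool)} (hU : IsOpen U) {Z : ℕ → Bool}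
    (hZ : Z ∈ U) : ∀ᶠ k in Filter.atTop, cylinder (initSeg Z k) ⊆ U := by
  obtain ⟨_, ⟨Y, n, rfl⟩, hZY, hYU⟩ :=
    (PiNat.isTopologicalBasis_cylinders fun _ => Bool).exists_subset_of_mem_open hZ hU
  rw [← PiNat.mem_cylinder_iff_eq.1 hZY] at hYU
  filter_upwards [Filter.eventually_ge_atTop n] with k hk
  rw [cylinder_initSeg]
  exact (PiNat.cylinder_anti Z hk).trans hYU

lemma exists_forall_initSeg_of_forall_exists (P : ℕ → List Bool → Bool → Prop)
    (h : ∀ n σ, ∃ b, P n σ b) :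
    ∃ Z : ℕ → Bool, ∀ n, P n (initSeg Z n) (Z n) := by
  choose pick hpick using h
  let τ : ℕ → List Bool := fun n => Nat.rec [] (fun n σ => σ ++ [pick n σ]) n
  refine ⟨fun n => pick n (τ n), fun n => ?_⟩
  have hτ : ∀ n, initSeg (fun n => pick n (τ n)) n = τ n := by
    intro n
    induction n with
    | zero => rfl
    | succ n ih => rw [initSeg_succ, ih]
  rw [hτ]
  exact hpick n (τ n)

lemma measurableSet_cylinder (σ : List Bool) : MeasurableSet (cylinder σ) := by
  have hσ : cylinder σ = ⋂ i : Fin σ.length, (fun X : ℕ → Bool => X i) ⁻¹' {σ.get i} := by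
    ext X; simp [mem_cylinder]
  rw [hσ]
  exact MeasurableSet.iInter fun i => measurable_pi_apply _ (measurableSet_singleton _)

lemma cylinder_subset_of_length_le {σ τ : List Bool} {X : ℕ → Bool} (hσ : X ∈ cylinder σ)
    (hτ : X ∈ cylinder τ) (h : σ.length ≤ τ.length) : cylinder τ ⊆ cylinder σ := by
  intro Y hY i
  have hi : (i : ℕ) < τ.length := i.2.trans_le h
  rw [hY ⟨i, hi⟩, ← hτ ⟨i, hi⟩, hσ i]

lemma isPiSystem_range_cylinder : IsPiSystem (range cylinder) := by
  rintro _ ⟨σ, rfl⟩ _ ⟨τ, rfl⟩ ⟨X, hσ, hτ⟩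
  rcases le_total σ.length τ.length with h | h
  · exact ⟨τ, (inter_eq_right.2 (cylinder_subset_of_length_le hσ hτ h)).symm⟩
  · exact ⟨σ, (inter_eq_left.2 (cylinder_subset_of_length_le hτ hσ h)).symm⟩

lemma generateFrom_range_cylinder :
    MeasurableSpace.generateFrom (range cylinder) = MeasurableSpace.pi := by
  refine le_antisymm (MeasurableSpace.generateFrom_le ?_) (iSup_le fun i => ?_)
  · rintro _ ⟨σ, rfl⟩
    exact measurableSet_cylinder σ
  · refine (@measurable_to_countable' Bool (ℕ → Bool) _ _ (MeasurableSpace.generateFrom _) _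
      fun b => ?_).comap_le
    have hfiber : (fun X : ℕ → Bool => X i) ⁻¹' {b} =
        ⋃ (σ : List Bool) (hi : i < σ.length) (_ : σ[i] = b), cylinder σ := by
      ext X
      simp only [mem_preimage, mem_singleton_iff, mem_iUnion]
      constructor
      · rintro rfl
        exact ⟨initSeg X (i + 1), by simp [initSeg], List.getElem_ofFn .., mem_cylinder_initSeg X _⟩
      · rintro ⟨σ, hi, rfl, hX⟩
        exact hX ⟨i, hi⟩
    rw [hfiber]
    exact .iUnion fun σ => .iUnion fun _ => .iUnion fun _ =>
      MeasurableSpace.measurableSet_generateFrom ⟨σ, rfl⟩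

section Measure

variable {μ : Measure (ℕ → Bool)}

lemma measure_localize_cylinder_singleton (hμ : IsFairCoin μ) (τ : List Bool) (b : Bool) :
    μ (localize (cylinder τ) [b]) = 2 * μ (cylinder τ ∩ cylinder [b]) := by
  have := hμ.1
  cases τ with
  | nil =>
    rw [cylinder_nil, localize_eq_univ (subset_univ _), univ_inter, hμ.2, measure_univ,
      List.length_singleton, pow_one, ENNReal.mul_inv_cancel two_ne_zero ENNReal.ofNat_ne_top]
  | cons c τ =>
    by_cases hcb : c = b
    · subst hcb
      have hloc : localize (cylinder (c :: τ)) [c] = cylinder τ := by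
        ext X
        simp [localize, mem_cylinder_cons, ocat]
      have hinter : cylinder (c :: τ) ∩ cylinder [c] = cylinder (c :: τ) := by
        refine inter_eq_left.2 fun X hX => ?_
        simp_all [mem_cylinder_cons, cylinder_nil]
      rw [hloc, hinter, hμ.2, hμ.2, List.length_cons, pow_succ', ← mul_assoc,
        ENNReal.mul_inv_cancel two_ne_zero ENNReal.ofNat_ne_top, one_mul]
    · have hloc : localize (cylinder (c :: τ)) [b] = ∅ := by
        ext X
        simp [localize, mem_cylinder_cons, ocat, Ne.symm hcb]
      have hinter : cylinder (c :: τ) ∩ cylinder [b] = ∅ := by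
        ext X
        simp only [mem_inter_iff, mem_cylinder_cons, mem_empty_iff_false, iff_false]
        rintro ⟨⟨rfl, -⟩, h, -⟩
        exact hcb h
      simp [hloc, hinter]

lemma map_ocat_singleton (hμ : IsFairCoin μ) (b : Bool) :
    μ.map (ocat [b]) = (2 : ENNReal) • μ.restrict (cylinder [b]) := by
  have := hμ.1
  have key : ∀ τ, μ.map (ocat [b]) (cylinder τ) =
      ((2 : ENNReal) • μ.restrict (cylinder [b])) (cylinder τ) := by
    intro τ
    rw [Measure.map_apply (measurable_ocat _) (measurableSet_cylinder τ), Measure.smul_apply,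
      Measure.restrict_apply (measurableSet_cylinder τ), smul_eq_mul]
    exact measure_localize_cylinder_singleton hμ τ b
  refine ext_of_generate_finite _ generateFrom_range_cylinder.symm isPiSystem_range_cylinder ?_ ?_
  · rintro _ ⟨τ, rfl⟩
    exact key τ
  · rw [← cylinder_nil]
    exact key []

variable {B : Set (ℕ → Bool)}

lemma measure_localize_singleton (hμ : IsFairCoin μ) (hB : MeasurableSet B) (b : Bool) :
    μ (localize B [b]) = 2 * μ (B ∩ cylinder [b]) := by
  rw [← Measure.restrict_apply hB, ← smul_eq_mul, ← Measure.smul_apply, ← map_ocat_singleton hμ,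
    Measure.map_apply (measurable_ocat _) hB]
  rfl

lemma measure_localize_le (hμ : IsFairCoin μ) (hB : MeasurableSet B) (σ : List Bool) :
    μ (localize B σ) ≤ 2 ^ σ.length * μ B := by
  induction σ generalizing B with
  | nil => simp [localize_nil]
  | cons b σ ih =>
    calc μ (localize B (b :: σ)) = μ (localize (localize B [b]) σ) := by
          rw [← localize_append, List.singleton_append]
    _ ≤ 2 ^ σ.length * μ (localize B [b]) := ih (measurableSet_localize hB _)
    _ = 2 ^ σ.length * (2 * μ (B ∩ cylinder [b])) := by rw [measure_localize_singleton hμ hB]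
    _ ≤ 2 ^ (b :: σ).length * μ B := by
          rw [List.length_cons, pow_succ, mul_assoc]
          gcongr
          exact inter_subset_left

lemma measure_localize_false_add_true (hμ : IsFairCoin μ) (hB : MeasurableSet B) :
    μ (localize B [false]) + μ (localize B [true]) = 2 * μ B := by
  have hcompl : B ∩ cylinder [true] = B \ cylinder [false] := by
    ext X
    simp [mem_cylinder_cons, cylinder_nil]
  rw [measure_localize_singleton hμ hB, measure_localize_singleton hμ hB, ← mul_add, hcompl,
    measure_inter_add_sdiff B (measurableSet_cylinder [false])]

lemma exists_measure_localize_append_le (hμ : IsFairCoin μ) (hB : MeasurableSet B)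
    (σ : List Bool) : ∃ b, μ (localize B (σ ++ [b])) ≤ μ (localize B σ) := by
  simp_rw [localize_append]
  by_contra! h
  have := ENNReal.add_lt_add (h false) (h true)
  rw [measure_localize_false_add_true hμ (measurableSet_localize hB σ), two_mul] at this
  exact lt_irrefl _ this

end Measure

variable {μ : Measure (ℕ → Bool)} {G : ℕ → Set (ℕ → Bool)}

theorem exists_measure_localize_accumulate_le (hμ : IsFairCoin μ)
    (hG : ∀ n, MeasurableSet (G n)) (hsmall : ∀ n, μ (G n) ≤ 2⁻¹ ^ (2 * n + 1)) :
    ∃ Z : ℕ → Bool, ∀ n, μ (localize (accumulate G n) (initSeg Z n)) ≤ 1 - 2⁻¹ ^ (n + 1) := by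
  have hacc : ∀ n, MeasurableSet (accumulate G n) := fun n => by
    rw [accumulate_def]
    exact .biUnion (to_countable _) fun m _ => hG m
  obtain ⟨Z, hZ⟩ := exists_forall_initSeg_of_forall_exists
    (fun n σ b => μ (localize (accumulate G n) (σ ++ [b])) ≤ μ (localize (accumulate G n) σ))
    fun n σ => exists_measure_localize_append_le hμ (hacc n) σ
  refine ⟨Z, fun n => ?_⟩
  induction n with
  | zero =>
    rw [initSeg, List.ofFn_zero, localize_nil, accumulate_zero_nat, zero_add, pow_one,
      ENNReal.one_sub_inv_two]
    simpa using hsmall 0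
  | succ n ih =>
    calc μ (localize (accumulate G (n + 1)) (initSeg Z (n + 1)))
        ≤ μ (localize (accumulate G n) (initSeg Z (n + 1))) +
            μ (localize (G (n + 1)) (initSeg Z (n + 1))) := by
          rw [accumulate_succ]
          exact measure_union_le _ _
      _ ≤ μ (localize (accumulate G n) (initSeg Z n)) + 2 ^ (n + 1) * μ (G (n + 1)) := by
          gcongr ?_ + ?_
          · rw [initSeg_succ]
            exact hZ n
          · simpa [initSeg] using measure_localize_le hμ (hG _) (initSeg Z (n + 1))
      _ ≤ 1 - 2⁻¹ ^ (n + 1) + 2 ^ (n + 1) * 2⁻¹ ^ (2 * (n + 1) + 1) := by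
          gcongr
          exact hsmall _
      _ = 1 - 2⁻¹ ^ (n + 1 + 1) := by
          rw [ENNReal.two_pow_mul_inv_two_pow_two_mul_add_one,
            ENNReal.one_sub_inv_two_pow_add_inv_two_pow_succ]

theorem notMem_of_measure_localize_accumulate_lt_one [IsProbabilityMeasure μ] {n : ℕ}
    (hG : IsOpen (G n)) {Z : ℕ → Bool}
    (hZ : ∀ k, μ (localize (accumulate G k) (initSeg Z k)) < 1) : Z ∉ G n := by
  intro hZG
  obtain ⟨k, hk, hkn⟩ :=
    ((eventually_cylinder_initSeg_subset hG hZG).and (Filter.eventually_ge_atTop n)).exists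
  have huniv : localize (accumulate G k) (initSeg Z k) = univ :=
    localize_eq_univ (hk.trans (subset_accumulate.trans (accumulate_subset_accumulate hkn)))
  simpa [huniv] using hZ k

end CantorSpace

open CantorSpace

/-- Given open sets `G_n` with `λ(G_n) ≤ 2^{-2n-1}`, letting
`L_n = ⋃_{m ≤ n} G_m`, there is a `Z` with `λ(L_n ∣ Z↾n) ≤ 1 − 2^{-n-1}` for
all `n`; moreover any such `Z` avoids every `G_n`. -/
theorem stmt3 (μ : Measure (ℕ → Bool)) (hμ : IsFairCoin μ)
    (G : ℕ → Set (ℕ → Bool)) (hopen : ∀ n, IsOpen (G n))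
    (hsmall : ∀ n, μ (G n) ≤ (2 : ENNReal)⁻¹ ^ (2 * n + 1))
    (L : ℕ → Set (ℕ → Bool)) (hL : ∀ n, L n = ⋃ m, ⋃ (_ : m ≤ n), G m) :
    (∃ Z : ℕ → Bool, ∀ n,
        μ (localize (L n) (initSeg Z n)) ≤ 1 - (2 : ENNReal)⁻¹ ^ (n + 1)) ∧
    (∀ Z : ℕ → Bool,
      (∀ n, μ (localize (L n) (initSeg Z n)) ≤ 1 - (2 : ENNReal)⁻¹ ^ (n + 1)) →
      ∀ n, Z ∉ G n) := by
  obtain rfl : L = accumulate G := funext hL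
  have := hμ.1
  refine ⟨exists_measure_localize_accumulate_le hμ (fun n => (hopen n).measurableSet) hsmall,
    fun Z hZ n => notMem_of_measure_localize_accumulate_lt_one (μ := μ) (hopen n) fun k => ?_⟩
  exact (hZ k).trans_lt (ENNReal.sub_lt_self ENNReal.one_ne_top one_ne_zero (by simp))
end

section
/- For every computable approximation g₀ : ℕ × ℕ → ℕ to a Δ⁰₂ function f, there exist a computable well-ordering R of order type ω and a computable function g₁ : ℕ × ℕ → ℕ such that ⟨g₀, g₁⟩ is an R-approximation to f. -/
/-- `R` is a computable well-ordering of ℕ (given by its computable characteristic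
function): a computable, irreflexive, transitive, total, well-founded strict order. -/
def CompWellOrder (R : ℕ → ℕ → Bool) : Prop :=
  Computable₂ R ∧
  (∀ a, R a a = false) ∧
  (∀ a b c, R a b = true → R b c = true → R a c = true) ∧
  (∀ a b, a ≠ b → R a b = true ∨ R b a = true) ∧
  WellFounded fun a b => R a b = true

/-- `⟨g₀, g₁⟩` is an `R`-approximation: both components are computable, and
whenever the pair changes value, the second component decreases in `R`. -/
def RApprox (R : ℕ → ℕ → Bool) (g₀ g₁ : ℕ → ℕ → ℕ) : Prop :=
  Computable₂ g₀ ∧ Computable₂ g₁ ∧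
  ∀ x s, (g₀ x (s + 1), g₁ x (s + 1)) ≠ (g₀ x s, g₁ x s) →
    R (g₁ x (s + 1)) (g₁ x s) = true

/-- `f` is `R`-c.e.: it is the pointwise limit of the first component of
some `R`-approximation. -/
def RCE (R : ℕ → ℕ → Bool) (f : ℕ → ℕ) : Prop :=
  ∃ g₀ g₁ : ℕ → ℕ → ℕ, RApprox R g₀ g₁ ∧ ∀ x, ∃ s₀, ∀ s ≥ s₀, g₀ x s = f x

/-- `f` is ω-c.e.: it has a computable approximation whose number of mind
changes is bounded by a computable function. -/
def OmegaCEFun (f : ℕ → ℕ) : Prop :=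
  ∃ g : ℕ → ℕ → ℕ, ∃ b : ℕ → ℕ, Computable₂ g ∧ Computable b ∧
    (∀ x, ∃ s₀, ∀ s ≥ s₀, g x s = f x) ∧
    (∀ x, ∀ F : Finset ℕ, (∀ s ∈ F, g x (s + 1) ≠ g x s) → F.card ≤ b x)

/-! Order the codes `⟨x, s⟩` of the stages at which column `x` of `g₀` changes (stage `0`
included) by `x` first and then by *decreasing* `s`, and let `g₁ x s` be the code of the last
change of column `x` up to stage `s`: it moves down at each change and is constant otherwise.
Since every column converges, it changes only finitely often, so each element has only finitely
many predecessors and the order has type `ω`. The remaining codes are interleaved (at odd ranks)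
so that the order is total on all of `ℕ`. -/

theorem wellFounded_of_finite_predecessors {α : Type*} {r : α → α → Prop}
    (irrefl : ∀ a, ¬ r a a) (trans : ∀ a b c, r a b → r b c → r a c)
    (hfin : ∀ a, {b | r b a}.Finite) : WellFounded r :=
  Subrelation.wf
    (fun {a b} hab => Set.ncard_lt_ncard
      ⟨fun c hc => trans c a b hc hab, fun hsub => irrefl a (hsub hab)⟩ (hfin b))
    (InvImage.wf (fun a => {b | r b a}.ncard) wellFounded_lt)

theorem compWellOrder_of_injective {α : Type*} [LinearOrder α] {R : ℕ → ℕ → Bool}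
    (hR : Computable₂ R) {key : ℕ → α} (hkey : Function.Injective key)
    (hRkey : ∀ a b, R a b = true ↔ key a < key b) (hfin : ∀ a, {b | R b a = true}.Finite) :
    CompWellOrder R := by
  have irrefl a : ¬ R a a = true := by rw [hRkey]; exact lt_irrefl _
  have trans a b c (hab : R a b = true) (hbc : R b c = true) : R a c = true := by
    rw [hRkey] at *; exact hab.trans hbc
  refine ⟨hR, fun a => Bool.eq_false_iff.2 (irrefl a), trans, fun a b hab => ?_,
    wellFounded_of_finite_predecessors irrefl trans hfin⟩
  simp only [hRkey]
  exact (hkey.ne hab).lt_or_gt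

namespace MindChange

variable (g₀ : ℕ → ℕ → ℕ)

def changesAt (x s : ℕ) : Bool := decide (s = 0) || !decide (g₀ x s = g₀ x (s - 1))

def rank (a : ℕ) : ℕ :=
  bif changesAt g₀ a.unpair.1 a.unpair.2 then 2 * a.unpair.1 else 2 * a + 1

def key (a : ℕ) : ℕ ×ₗ ℕᵒᵈ := toLex (rank g₀ a, OrderDual.toDual a.unpair.2)

def order (a b : ℕ) : Bool := decide (key g₀ a < key g₀ b)

def lastChange (x : ℕ) : ℕ → ℕ
  | 0 => 0
  | s + 1 => bif changesAt g₀ x (s + 1) then s + 1 else lastChange x s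

variable {g₀}

theorem lastChange_le (x s : ℕ) : lastChange g₀ x s ≤ s := by
  induction s with
  | zero => rfl
  | succ s ih =>
    rw [lastChange]
    cases changesAt g₀ x (s + 1) <;> simp only [cond_true, cond_false] <;> omega

theorem changesAt_lastChange (x s : ℕ) : changesAt g₀ x (lastChange g₀ x s) = true := by
  induction s with
  | zero => rfl
  | succ s ih => cases h : changesAt g₀ x (s + 1) <;> simp [lastChange, h, ih]

theorem changesAt_le_of_eventually_eq {x s₀ c : ℕ} (hstab : ∀ s ≥ s₀, g₀ x s = c) {s : ℕ}
    (h : changesAt g₀ x s = true) : s ≤ s₀ := by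
  by_contra! hlt
  have : g₀ x s = g₀ x (s - 1) := by rw [hstab s hlt.le, hstab (s - 1) (by omega)]
  simp [changesAt, this] at h
  omega

theorem key_injective : Function.Injective (key g₀) := by
  intro a b h
  simp only [key, toLex_inj, Prod.mk.injEq, OrderDual.toDual_inj, rank] at h
  obtain ⟨hrank, hs⟩ := h
  cases ha : changesAt g₀ a.unpair.1 a.unpair.2 <;>
    cases hb : changesAt g₀ b.unpair.1 b.unpair.2 <;>
    simp only [ha, hb, cond_true, cond_false] at hrank
  · omega
  · omega
  · omega
  · rw [← Nat.pair_unpair a, ← Nat.pair_unpair b, hs, show a.unpair.1 = b.unpair.1 by omega]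

theorem order_pair {x s t : ℕ} (hs : changesAt g₀ x s = true) (ht : changesAt g₀ x t = true)
    (hst : s < t) : order g₀ (Nat.pair x t) (Nat.pair x s) = true := by
  simp [order, key, rank, hs, ht, Prod.Lex.toLex_lt_toLex, hst]

theorem finite_rank_le {f : ℕ → ℕ} (happrox : ∀ x, ∃ s₀, ∀ s ≥ s₀, g₀ x s = f x) (C : ℕ) :
    {b | rank g₀ b ≤ C}.Finite := by
  choose s₀ hs₀ using happrox
  refine ((Set.finite_Iic C).union ((Set.finite_Iic C).biUnion
    fun x _ => (Set.finite_Iic (s₀ x)).image (Nat.pair x))).subset fun b hb => ?_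
  simp only [Set.mem_ofPred_eq, rank] at hb
  cases h : changesAt g₀ b.unpair.1 b.unpair.2
  · simp only [h, cond_false] at hb
    exact Or.inl (by simp only [Set.mem_Iic]; omega)
  · simp only [h, cond_true] at hb
    refine Or.inr (Set.mem_biUnion (x := b.unpair.1) (by simp only [Set.mem_Iic]; omega) ?_)
    exact ⟨b.unpair.2, changesAt_le_of_eventually_eq (hs₀ _) h, Nat.pair_unpair b⟩

theorem finite_order_predecessors {f : ℕ → ℕ} (happrox : ∀ x, ∃ s₀, ∀ s ≥ s₀, g₀ x s = f x)
    (a : ℕ) : {b | order g₀ b a = true}.Finite :=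
  (finite_rank_le happrox (rank g₀ a)).subset fun b hb => by
    simp only [Set.mem_ofPred_eq, order, key, decide_eq_true_eq, Prod.Lex.toLex_lt_toLex] at hb ⊢
    omega

theorem computable₂_changesAt (hg₀ : Computable₂ g₀) : Computable₂ (changesAt g₀) :=
  Primrec.or.to_comp.comp (Primrec.eq.decide.to_comp.comp Computable.snd (Computable.const 0))
    (Primrec.not.to_comp.comp (Primrec.eq.decide.to_comp.comp hg₀
      (hg₀.comp Computable.fst (Primrec.pred.to_comp.comp Computable.snd))))

theorem computable_rank (hg₀ : Computable₂ g₀) : Computable (rank g₀) := by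
  have unpair₁ : Computable fun a : ℕ => a.unpair.1 := (Primrec.fst.comp Primrec.unpair).to_comp
  have unpair₂ : Computable fun a : ℕ => a.unpair.2 := (Primrec.snd.comp Primrec.unpair).to_comp
  exact ((computable₂_changesAt hg₀).comp unpair₁ unpair₂).cond
    (Primrec.nat_mul.to_comp.comp (Computable.const 2) unpair₁)
    (Computable.succ.comp (Primrec.nat_mul.to_comp.comp (Computable.const 2) Computable.id))

theorem order_eq (a b : ℕ) : order g₀ a b =
    (decide (rank g₀ a < rank g₀ b) ||
      decide (rank g₀ a = rank g₀ b) && decide (b.unpair.2 < a.unpair.2)) := by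
  simp [order, key, Prod.Lex.toLex_lt_toLex]

theorem computable₂_order (hg₀ : Computable₂ g₀) : Computable₂ (order g₀) := by
  have rank₁ := (computable_rank hg₀).comp (Computable.fst (α := ℕ) (β := ℕ))
  have rank₂ := (computable_rank hg₀).comp (Computable.snd (α := ℕ) (β := ℕ))
  have unpair₂ : Computable fun a : ℕ => a.unpair.2 := (Primrec.snd.comp Primrec.unpair).to_comp
  refine Computable.of_eq (f := fun p : ℕ × ℕ => _) ?_ fun p => (order_eq p.1 p.2).symm
  exact Primrec.or.to_comp.comp (Primrec.nat_lt.decide.to_comp.comp rank₁ rank₂)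
    (Primrec.and.to_comp.comp (Primrec.eq.decide.to_comp.comp rank₁ rank₂)
      (Primrec.nat_lt.decide.to_comp.comp (unpair₂.comp Computable.snd)
        (unpair₂.comp Computable.fst)))

theorem computable₂_lastChange (hg₀ : Computable₂ g₀) : Computable₂ (lastChange g₀) := by
  have step : Computable₂ fun (p : ℕ × ℕ) (q : ℕ × ℕ) =>
      bif changesAt g₀ p.1 (q.1 + 1) then q.1 + 1 else q.2 :=
    ((computable₂_changesAt hg₀).comp (Computable.fst.comp Computable.fst)
      (Computable.succ.comp (Computable.fst.comp Computable.snd))).cond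
      (Computable.succ.comp (Computable.fst.comp Computable.snd))
      (Computable.snd.comp Computable.snd)
  refine (Computable.nat_rec Computable.snd (Computable.const 0) step).of_eq fun p => ?_
  induction p.2 with
  | zero => rfl
  | succ s ih => rw [lastChange, ← ih]

theorem compWellOrder_order (hg₀ : Computable₂ g₀) {f : ℕ → ℕ}
    (happrox : ∀ x, ∃ s₀, ∀ s ≥ s₀, g₀ x s = f x) : CompWellOrder (order g₀) :=
  compWellOrder_of_injective (computable₂_order hg₀) key_injective
    (fun _ _ => decide_eq_true_iff) (finite_order_predecessors happrox)

theorem rApprox_lastChange (hg₀ : Computable₂ g₀) :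
    RApprox (order g₀) g₀ fun x s => Nat.pair x (lastChange g₀ x s) := by
  refine ⟨hg₀, Primrec₂.natPair.to_comp.comp Computable.fst (computable₂_lastChange hg₀), ?_⟩
  intro x s hne
  cases h : changesAt g₀ x (s + 1)
  · have hg : g₀ x (s + 1) = g₀ x s := by simpa [changesAt] using h
    simp [lastChange, h, hg] at hne
  · simp only [lastChange, h, cond_true]
    exact order_pair (changesAt_lastChange x s) h (Nat.lt_succ_of_le (lastChange_le x s))

end MindChange

/-- Ershov-style fact: every computable approximation `g₀` to a `Δ⁰₂` function
`f` extends to an `R`-approximation `⟨g₀, g₁⟩` for some computable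
well-ordering `R` of order type ω (all initial segments finite). -/
theorem stmt8 (f : ℕ → ℕ) (g₀ : ℕ → ℕ → ℕ) (hg₀ : Computable₂ g₀)
    (happrox : ∀ x, ∃ s₀, ∀ s ≥ s₀, g₀ x s = f x) :
    ∃ R : ℕ → ℕ → Bool, CompWellOrder R ∧
      (∀ a, {b | R b a = true}.Finite) ∧
      ∃ g₁ : ℕ → ℕ → ℕ, RApprox R g₀ g₁ :=
  ⟨MindChange.order g₀, MindChange.compWellOrder_order hg₀ happrox,
    MindChange.finite_order_predecessors happrox, _, MindChange.rApprox_lastChange hg₀⟩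
end
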